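/- arXiv:2501.06630 — 2 statements merged into one kernel-verified Lean document; each statement's English description precedes it below -/
import Mathlib

section
/- Let X be a Banach space, {A_n}_{n≥1} a sequence of bounded linear operators on X, {‖·‖_k}_{k≥1} a sequence of norms on X, and μ a discrete growth rate satisfying μ_{n+1}/μ_n ≤ θ for all n ≥ 0 and some θ ≥ 1. Then the following three assertions are equivalent: (i) the system x_{n+1}=A_n x_n admits a μ-dichotomy with respect to the norms {‖·‖_k} relative to a sequence of projections {P_k}; (ii) the system admits an ordinary dichotomy with respect to {‖·‖_k} relative to projections {P_k}, and for every discrete growth rate η with η_{n+1}/η_n ≤ θ for all n and some θ ≥ 1, the rescaled system y_{n+1}=Q_n^{μ,η} y_n admits an η-dichotomy with respect to the rescaled norms {‖·‖_k^η} relative to the projections P_k^η = P_{⌊μ̃⁻¹(η_{k−1})⌋+1}; (iii) the system admits an ordinary dichotomy with respect to {‖·‖_k} relative to projections {P_k}, and there exists one discrete growth rate η with η_{n+1}/η_n ≤ θ for all n and some θ ≥ 1 such that the rescaled system admits an η-dichotomy with respect to {‖·‖_k^η} relative to the projections P_k^η. -/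
noncomputable section

open Filter Metric Set Topology

variable {X : Type*} [NormedAddCommGroup X] [NormedSpace ℝ X]

/-- A discrete growth rate: strictly increasing, `μ 0 = 1`, `μ n → ∞`. -/
def IsGrowthRate (μ : ℕ → ℝ) : Prop :=
  StrictMono μ ∧ μ 0 = 1 ∧ Filter.Tendsto μ Filter.atTop Filter.atTop

/-- The piecewise linear extension `μ̃` of a growth rate. -/
def tildeExt (μ : ℕ → ℝ) (t : ℝ) : ℝ :=
  μ ⌊t⌋₊ + (t - (⌊t⌋₊ : ℝ)) * (μ (⌊t⌋₊ + 1) - μ ⌊t⌋₊)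

/-- `⌊μ̃⁻¹ t⌋`, i.e. the largest `n` with `μ n ≤ t` (for `t ≥ 1`). -/
def floorInvTilde (μ : ℕ → ℝ) (t : ℝ) : ℕ := sSup {n : ℕ | μ n ≤ t}

/-- `⌊μ̃⁻¹ (η (k-1))⌋ + 1`. -/
def idxQ (μ η : ℕ → ℝ) (k : ℕ) : ℕ := floorInvTilde μ (η (k - 1)) + 1

def evolFwd (A : ℕ → X →L[ℝ] X) (k : ℕ) : ℕ → X →L[ℝ] X
  | 0 => ContinuousLinearMap.id ℝ X
  | n + 1 => (A (k + n)).comp (evolFwd A k n)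

/-- The evolution family `Φ_A(m,k) = A_{m-1} ∘ ⋯ ∘ A_k` for `m ≥ k`. -/
def evol (A : ℕ → X →L[ℝ] X) (m k : ℕ) : X →L[ℝ] X := evolFwd A k (m - k)

def evolFwdE (A : ℕ → X ≃L[ℝ] X) (k : ℕ) : ℕ → X ≃L[ℝ] X
  | 0 => ContinuousLinearEquiv.refl ℝ X
  | n + 1 => (evolFwdE A k n).trans (A (k + n))

/-- Two-sided evolution family of a sequence of invertible operators:
`Φ_A(m,k) = A_{m-1}⋯A_k` for `m > k`, `Id` for `m = k`, `A_m⁻¹⋯A_{k-1}⁻¹` for `m < k`. -/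
def evolEquiv (A : ℕ → X ≃L[ℝ] X) (m k : ℕ) : X ≃L[ℝ] X :=
  if k ≤ m then evolFwdE A k (m - k) else (evolFwdE A m (k - m)).symm

def evolE (A : ℕ → X ≃L[ℝ] X) (m k : ℕ) : X →L[ℝ] X := (evolEquiv A m k : X →L[ℝ] X)

/-- The time-rescaled sequence `Q_n^{μ,η} = Φ_A(⌊μ̃⁻¹(η n)⌋+1, ⌊μ̃⁻¹(η (n-1))⌋+1)`. -/
def Qseq (A : ℕ → X →L[ℝ] X) (μ η : ℕ → ℝ) (n : ℕ) : X →L[ℝ] X :=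
  evol A (idxQ μ η (n + 1)) (idxQ μ η n)

def QseqE (A : ℕ → X ≃L[ℝ] X) (μ η : ℕ → ℝ) (n : ℕ) : X ≃L[ℝ] X :=
  evolEquiv A (idxQ μ η (n + 1)) (idxQ μ η n)

/-- A sequence of norms on `X`. -/
def IsNormFamily (Nrm : ℕ → X → ℝ) : Prop :=
  ∀ k, (∀ x y : X, Nrm k (x + y) ≤ Nrm k x + Nrm k y) ∧
    (∀ (c : ℝ) (x : X), Nrm k (c • x) = |c| * Nrm k x) ∧
    (∀ x : X, Nrm k x = 0 → x = 0)

/-- Each norm in the family is equivalent to the ambient norm. -/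
def NormsEquivalent (Nrm : ℕ → X → ℝ) : Prop :=
  ∀ k, ∃ α β : ℝ, 0 < α ∧ 0 < β ∧ ∀ x : X, α * ‖x‖ ≤ Nrm k x ∧ Nrm k x ≤ β * ‖x‖

/-- (od1)–(od2): a sequence of projections compatible with the dynamics, such that the
restriction of `A k` to `Ker P k` is an isomorphism onto `Ker P (k+1)`. -/
def ProjectionsCompat (A P : ℕ → X →L[ℝ] X) : Prop :=
  (∀ k, 1 ≤ k → (P k).comp (P k) = P k) ∧
  (∀ k, 1 ≤ k → (A k).comp (P k) = (P (k + 1)).comp (A k)) ∧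
  (∀ k, 1 ≤ k → Set.BijOn (⇑(A k)) {x : X | P k x = 0} {x : X | P (k + 1) x = 0})

/-- μ-dichotomy with respect to a sequence of norms, relative to given projections.
For `m ≤ k`, `Φ_A(m,k)(Id - P_k)x` denotes the unique `z ∈ Ker P_m` with
`Φ_A(k,m) z = (Id - P_k) x`. -/
def MuDichotomyNormsWith (μ : ℕ → ℝ) (A P : ℕ → X →L[ℝ] X) (Nrm : ℕ → X → ℝ) : Prop :=
  ProjectionsCompat A P ∧
  ∃ N ν : ℝ, 1 ≤ N ∧ 0 < ν ∧
    (∀ k m : ℕ, 1 ≤ k → k ≤ m → ∀ x : X,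
      Nrm m (evol A m k (P k x)) ≤ N * (μ m / μ k) ^ (-ν) * Nrm k x) ∧
    (∀ m k : ℕ, 1 ≤ m → m ≤ k → ∀ x z : X, P m z = 0 → evol A k m z = x - P k x →
      Nrm m z ≤ N * (μ k / μ m) ^ (-ν) * Nrm k x)

/-- Ordinary dichotomy with respect to a sequence of norms, relative to given projections. -/
def OrdinaryDichotomyNormsWith (A P : ℕ → X →L[ℝ] X) (Nrm : ℕ → X → ℝ) : Prop :=
  ProjectionsCompat A P ∧
  ∃ K : ℝ, 1 ≤ K ∧
    (∀ k m : ℕ, 1 ≤ k → k ≤ m → ∀ x : X, Nrm m (evol A m k (P k x)) ≤ K * Nrm k x) ∧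
    (∀ m k : ℕ, 1 ≤ m → m ≤ k → ∀ x z : X, P m z = 0 → evol A k m z = x - P k x →
      Nrm m z ≤ K * Nrm k x)

/-- μ-dichotomy (with respect to a sequence of norms) of a system of invertible operators. -/
def MuDichotomyNormsE (μ : ℕ → ℝ) (A : ℕ → X ≃L[ℝ] X) (Nrm : ℕ → X → ℝ) : Prop :=
  ∃ P : ℕ → X →L[ℝ] X,
    (∀ k, 1 ≤ k → (P k).comp (P k) = P k) ∧
    (∀ k, 1 ≤ k → ((A k : X →L[ℝ] X)).comp (P k) = (P (k + 1)).comp ((A k : X →L[ℝ] X))) ∧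
    (∀ k, 1 ≤ k → Set.BijOn (⇑(A k)) {x : X | P k x = 0} {x : X | P (k + 1) x = 0}) ∧
    ∃ N ν : ℝ, 1 ≤ N ∧ 0 < ν ∧
      (∀ k m : ℕ, 1 ≤ k → k ≤ m → ∀ x : X,
        Nrm m (evolE A m k (P k x)) ≤ N * (μ m / μ k) ^ (-ν) * Nrm k x) ∧
      (∀ m k : ℕ, 1 ≤ m → m ≤ k → ∀ x : X,
        Nrm m (evolE A m k (x - P k x)) ≤ N * (μ k / μ m) ^ (-ν) * Nrm k x)

/-- μ-dichotomy with respect to the original norm. -/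
def MuDichotomy (μ : ℕ → ℝ) (B : ℕ → X →L[ℝ] X) : Prop :=
  ∃ P : ℕ → X →L[ℝ] X, MuDichotomyNormsWith μ B P fun _ x => ‖x‖

/-- The scaled system `Ã_n = (μ_{n+1}/μ_n)^{-λ} A_n`. -/
def scaledSys (μ : ℕ → ℝ) (A : ℕ → X ≃L[ℝ] X) (l : ℝ) (n : ℕ) : X →L[ℝ] X :=
  ((μ (n + 1) / μ n) ^ (-l)) • (A n : X →L[ℝ] X)

/-- The generalized dichotomy spectrum `Σ_{μD,𝔸}`. -/
def muSpectrum (μ : ℕ → ℝ) (A : ℕ → X ≃L[ℝ] X) : Set ℝ :=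
  {l : ℝ | ¬ MuDichotomy μ (scaledSys μ A l)}

/-- The exponential growth rate `n ↦ e^n`. -/
def expRate : ℕ → ℝ := fun n => Real.exp n

/-- `Σ_{ED,ℚ}`: the Sacker–Sell spectrum of the time-rescaled system. -/
def expSpectrumQ (μ : ℕ → ℝ) (A : ℕ → X ≃L[ℝ] X) : Set ℝ :=
  {l : ℝ | ¬ MuDichotomy expRate fun n => Real.exp (-l) • (QseqE A μ expRate n : X →L[ℝ] X)}

/-- `f` is a homeomorphism. -/
def IsHomeoOf {Y : Type*} [TopologicalSpace Y] (f : Y → Y) : Prop :=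
  ∃ h : Y ≃ₜ Y, ∀ x, h x = f x

/-- The perturbed maps `x ↦ A_n x + g_n x`. -/
def pert (A : ℕ → X ≃L[ℝ] X) (g : ℕ → X → X) (n : ℕ) : X → X := fun x => A n x + g n x

def nlFwd (F : ℕ → X → X) (n : ℕ) : ℕ → X → X
  | 0 => id
  | j + 1 => F (n + j) ∘ nlFwd F n j

/-- Nonlinear evolution `𝒢(m,n) = (A_{m-1}+g_{m-1})∘⋯∘(A_n+g_n)` for `m ≥ n`. -/
def nlEvol (A : ℕ → X ≃L[ℝ] X) (g : ℕ → X → X) (m n : ℕ) : X → X := nlFwd (pert A g) n (m - n)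

def nlBwd (F : ℕ → X → X) (m : ℕ) : ℕ → X → X
  | 0 => id
  | j + 1 => nlBwd F m j ∘ Function.invFun (F (m + j))

/-- Nonlinear evolution `𝒢(m,n) = (A_m+g_m)⁻¹∘⋯∘(A_{n-1}+g_{n-1})⁻¹` for `m ≤ n`. -/
def nlEvolBwd (A : ℕ → X ≃L[ℝ] X) (g : ℕ → X → X) (m n : ℕ) : X → X :=
  nlBwd (pert A g) m (n - m)

/-- The rescaled nonlinearities `f_n`. -/
def fSeq (A : ℕ → X ≃L[ℝ] X) (g : ℕ → X → X) (μ : ℕ → ℝ) (n : ℕ) (x : X) : X :=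
  ∑ j ∈ Finset.Icc (floorInvTilde μ (expRate (n - 1)) + 1) (floorInvTilde μ (expRate n)),
    evolE A (floorInvTilde μ (expRate n) + 1) (j + 1)
      (g j (nlEvol A g j (floorInvTilde μ (expRate (n - 1)) + 1) x))

/-- The class `𝒪_μ^k`, with constant `M`. -/
def InOmegaMu (μ : ℕ → ℝ) (k : ℕ) (f : ℕ → X → X) (M : ℝ) : Prop :=
  (∀ n, ContDiff ℝ (k : ℕ∞) (f n)) ∧ (∀ n, f n 0 = 0) ∧ (∀ n, fderiv ℝ (f n) 0 = 0) ∧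
  ∀ n, 1 ≤ n → ∀ x : X, ∀ j : ℕ, j ≤ k →
    ‖iteratedFDeriv ℝ j (f n) x‖ ≤ M * (μ (n + 1) - μ n) / μ n



section Helpers

variable {μ η : ℕ → ℝ} {A P : ℕ → X →L[ℝ] X} {Nrm : ℕ → X → ℝ}

lemma evolFwd_add (A : ℕ → X →L[ℝ] X) (k m n : ℕ) :
    evolFwd A k (m + n) = (evolFwd A (k + m) n).comp (evolFwd A k m) := by
  induction n with
  | zero => simp [evolFwd]
  | succ n ih =>
      show evolFwd A k (m + n + 1) = _
      rw [evolFwd, ih]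
      show _ = ((A (k + m + n)).comp (evolFwd A (k+m) n)).comp (evolFwd A k m)
      rw [ContinuousLinearMap.comp_assoc]
      congr 2
      omega

lemma evol_comp (A : ℕ → X →L[ℝ] X) {a b c : ℕ} (hab : a ≤ b) (hbc : b ≤ c) :
    (evol A c b).comp (evol A b a) = evol A c a := by
  unfold evol
  have h1 : c - a = (b - a) + (c - b) := by omega
  have h2 : a + (b - a) = b := by omega
  rw [h1, evolFwd_add A a (b-a) (c-b), h2]

lemma evol_evol (A : ℕ → X →L[ℝ] X) {a b c : ℕ} (hab : a ≤ b) (hbc : b ≤ c) (v : X) :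
    evol A c b (evol A b a v) = evol A c a v := by
  rw [← evol_comp A hab hbc]; rfl

lemma evol_self (A : ℕ → X →L[ℝ] X) (k : ℕ) (v : X) : evol A k k v = v := by
  simp [evol, evolFwd]

lemma evol_succ_left (A : ℕ → X →L[ℝ] X) {k m : ℕ} (h : k ≤ m) :
    evol A (m + 1) k = (A m).comp (evol A m k) := by
  unfold evol
  have h1 : m + 1 - k = (m - k) + 1 := by omega
  rw [h1, evolFwd]
  congr 2
  omega

lemma evol_proj_comm (hP : ProjectionsCompat A P) {k m : ℕ} (hk : 1 ≤ k) (hkm : k ≤ m) :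
    (evol A m k).comp (P k) = (P m).comp (evol A m k) := by
  induction m, hkm using Nat.le_induction with
  | base =>
      ext v; simp [evol, evolFwd]
  | succ m hm ih =>
      rw [evol_succ_left A hm, ContinuousLinearMap.comp_assoc, ih,
        ← ContinuousLinearMap.comp_assoc, hP.2.1 m (hk.trans hm),
        ContinuousLinearMap.comp_assoc]

lemma evol_proj_apply (hP : ProjectionsCompat A P) {k m : ℕ} (hk : 1 ≤ k) (hkm : k ≤ m)
    (v : X) : evol A m k (P k v) = P m (evol A m k v) := by
  have := congrArg (fun T : X →L[ℝ] X => T v) (evol_proj_comm hP hk hkm)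
  simpa using this

lemma evol_bijOn (hP : ProjectionsCompat A P) {k m : ℕ} (hk : 1 ≤ k) (hkm : k ≤ m) :
    Set.BijOn (evol A m k) {x : X | P k x = 0} {x : X | P m x = 0} := by
  induction m, hkm using Nat.le_induction with
  | base =>
      have : Set.EqOn (evol A k k) id {x : X | P k x = 0} := fun v _ => evol_self A k v
      exact (Set.bijOn_id _).congr fun v hv => (evol_self A k v).symm
  | succ m hm ih =>
      have hcomp : Set.EqOn (evol A (m+1) k) ((A m) ∘ (evol A m k)) {x : X | P k x = 0} := by
        intro v _
        rw [evol_succ_left A hm]; rfl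
      exact ((hP.2.2 m (hk.trans hm)).comp ih).congr fun v hv => (hcomp hv).symm

end Helpers

section Helpers2

variable {μ η : ℕ → ℝ} {A P : ℕ → X →L[ℝ] X} {Nrm : ℕ → X → ℝ}

lemma IsGrowthRate.one_le (hμ : IsGrowthRate μ) (n : ℕ) : 1 ≤ μ n := by
  rw [← hμ.2.1]; exact hμ.1.monotone (Nat.zero_le n)

lemma IsGrowthRate.pos (hμ : IsGrowthRate μ) (n : ℕ) : 0 < μ n :=
  lt_of_lt_of_le one_pos (hμ.one_le n)

lemma ratio_step {θ : ℝ} (hμ : IsGrowthRate μ) (hθ : ∀ n, μ (n + 1) / μ n ≤ θ) (n : ℕ) :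
    μ (n + 1) ≤ θ * μ n := by
  have := hθ n
  rw [div_le_iff₀ (hμ.pos n)] at this
  linarith [this]

lemma floorInv_bddAbove (hμ : IsGrowthRate μ) (t : ℝ) : BddAbove {n : ℕ | μ n ≤ t} := by
  obtain ⟨N, hN⟩ := (hμ.2.2.eventually_gt_atTop t).exists_forall_of_atTop
  exact ⟨N, fun n hn => by
    by_contra h
    exact absurd (hN n (le_of_not_ge h)) (not_lt.mpr hn)⟩

lemma floorInv_mem (hμ : IsGrowthRate μ) {t : ℝ} (ht : 1 ≤ t) :
    μ (floorInvTilde μ t) ≤ t := by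
  have h0 : (0 : ℕ) ∈ {n : ℕ | μ n ≤ t} := by simp [hμ.2.1, ht]
  exact Nat.sSup_mem ⟨0, h0⟩ (floorInv_bddAbove hμ t)

lemma le_floorInv (hμ : IsGrowthRate μ) {t : ℝ} {j : ℕ} (hj : μ j ≤ t) :
    j ≤ floorInvTilde μ t :=
  le_csSup (floorInv_bddAbove hμ t) hj

lemma floorInv_lt_succ (hμ : IsGrowthRate μ) {t : ℝ} (ht : 1 ≤ t) :
    t < μ (floorInvTilde μ t + 1) := by
  by_contra h
  have := le_floorInv hμ (le_of_not_gt h)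
  omega

lemma floorInv_le_iff (hμ : IsGrowthRate μ) {t : ℝ} (ht : 1 ≤ t) {j : ℕ} :
    j ≤ floorInvTilde μ t ↔ μ j ≤ t := by
  constructor
  · intro h
    exact le_trans (hμ.1.monotone h) (floorInv_mem hμ ht)
  · exact le_floorInv hμ

lemma one_le_idxQ : 1 ≤ idxQ μ η k := Nat.le_add_left 1 _

lemma idxQ_mono (hμ : IsGrowthRate μ) (hη : IsGrowthRate η) {k m : ℕ} (h : k ≤ m) :
    idxQ μ η k ≤ idxQ μ η m := by
  unfold idxQ
  have : η (k - 1) ≤ η (m - 1) := hη.1.monotone (by omega)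
  exact Nat.add_le_add_right
    (le_floorInv hμ (le_trans (floorInv_mem hμ (hη.one_le _)) this)) 1

lemma eta_lt_mu_idxQ (hμ : IsGrowthRate μ) (hη : IsGrowthRate η) (k : ℕ) :
    η (k - 1) < μ (idxQ μ η k) :=
  floorInv_lt_succ hμ (hη.one_le _)

lemma mu_idxQ_le {θ : ℝ} (hμ : IsGrowthRate μ) (hη : IsGrowthRate η)
    (hθ1 : 1 ≤ θ) (hθ : ∀ n, μ (n + 1) / μ n ≤ θ) (k : ℕ) :
    μ (idxQ μ η k) ≤ θ * η (k - 1) := by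
  calc μ (idxQ μ η k) ≤ θ * μ (floorInvTilde μ (η (k - 1))) := ratio_step hμ hθ _
    _ ≤ θ * η (k - 1) :=
        mul_le_mul_of_nonneg_left (floorInv_mem hμ (hη.one_le _)) (by linarith)

lemma evol_Qseq (hμ : IsGrowthRate μ) (hη : IsGrowthRate η) {k m : ℕ} (h : k ≤ m) :
    evol (Qseq A μ η) m k = evol A (idxQ μ η m) (idxQ μ η k) := by
  induction m, h using Nat.le_induction with
  | base => ext v; simp [evol, evolFwd]
  | succ m hm ih =>
      rw [evol_succ_left _ hm, ih]
      exact evol_comp A (idxQ_mono hμ hη hm) (idxQ_mono hμ hη (Nat.le_succ m))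

lemma nrm_nonneg (hNrm : IsNormFamily Nrm) (k : ℕ) (x : X) : 0 ≤ Nrm k x := by
  obtain ⟨htri, hsmul, _⟩ := hNrm k
  have h0 : Nrm k 0 = 0 := by
    have := hsmul 0 0
    simpa using this
  have : Nrm k (x + (-1 : ℝ) • x) ≤ Nrm k x + Nrm k ((-1 : ℝ) • x) := htri x _
  rw [hsmul (-1) x] at this
  simp at this
  rw [h0] at this
  linarith

lemma rpow_neg_le_of_le {a b D ν : ℝ} (ha : 0 < a) (hb : 0 < b) (hD : 1 ≤ D) (hν : 0 ≤ ν)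
    (h : b ≤ D * a) : a ^ (-ν) ≤ D ^ ν * b ^ (-ν) := by
  have hD0 : (0:ℝ) < D := lt_of_lt_of_le one_pos hD
  have hba : b / D ≤ a := (div_le_iff₀ hD0).mpr (by linarith [h, mul_comm a D])
  have hbD : (0:ℝ) < b / D := div_pos hb hD0
  have h1 : a ^ (-ν) ≤ (b / D) ^ (-ν) :=
    Real.rpow_le_rpow_of_nonpos hbD hba (neg_nonpos.mpr hν)
  calc a ^ (-ν) ≤ (b / D) ^ (-ν) := h1
    _ = b ^ (-ν) * (D ^ (-ν))⁻¹ := by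
        rw [div_eq_mul_inv, Real.mul_rpow hb.le (inv_nonneg.mpr hD0.le),
          Real.inv_rpow hD0.le]
    _ = D ^ ν * b ^ (-ν) := by
        rw [Real.rpow_neg hD0.le, inv_inv, mul_comm]

lemma one_le_rpow' {D ν : ℝ} (hD : 1 ≤ D) (hν : 0 ≤ ν) : 1 ≤ D ^ ν := by
  calc (1:ℝ) = D ^ (0:ℝ) := (Real.rpow_zero D).symm
    _ ≤ D ^ ν := Real.rpow_le_rpow_of_exponent_le hD hν

end Helpers2

section Directions

variable {μ η : ℕ → ℝ} {A P : ℕ → X →L[ℝ] X} {Nrm : ℕ → X → ℝ}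

lemma const_transfer {N ν a b D L R : ℝ} (hN : 0 ≤ N) (ha : 0 < a) (hb : 0 < b) (hD : 1 ≤ D)
    (hν : 0 ≤ ν) (hab : b ≤ D * a) (hR : 0 ≤ R) (hL : L ≤ N * a ^ (-ν) * R) :
    L ≤ (N * D ^ ν) * b ^ (-ν) * R := by
  refine hL.trans ?_
  have h1 := rpow_neg_le_of_le ha hb hD hν hab
  have h2 : N * a ^ (-ν) ≤ N * D ^ ν * b ^ (-ν) := by
    calc N * a ^ (-ν) ≤ N * (D ^ ν * b ^ (-ν)) := mul_le_mul_of_nonneg_left h1 hN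
      _ = N * D ^ ν * b ^ (-ν) := by ring
  exact mul_le_mul_of_nonneg_right h2 hR

lemma dir12 (hμ : IsGrowthRate μ) {θμ : ℝ} (hθμ1 : 1 ≤ θμ) (hθμ : ∀ n, μ (n + 1) / μ n ≤ θμ)
    (hNrm : IsNormFamily Nrm) (h : MuDichotomyNormsWith μ A P Nrm) :
    OrdinaryDichotomyNormsWith A P Nrm ∧
      ∀ η : ℕ → ℝ, IsGrowthRate η → (∃ θ : ℝ, 1 ≤ θ ∧ ∀ n, η (n + 1) / η n ≤ θ) →
        MuDichotomyNormsWith η (Qseq A μ η) (fun k => P (idxQ μ η k))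
          fun k => Nrm (idxQ μ η k) := by
  obtain ⟨hP, N, ν, hN, hν, h1, h2⟩ := h
  constructor
  · -- ordinary dichotomy
    refine ⟨hP, N, hN, ?_, ?_⟩
    · intro k m hk hkm x
      have base := h1 k m hk hkm x
      refine base.trans ?_
      have hr : 1 ≤ μ m / μ k := (one_le_div (hμ.pos k)).mpr (hμ.1.monotone hkm)
      have hrp : (μ m / μ k) ^ (-ν) ≤ 1 :=
        Real.rpow_le_one_of_one_le_of_nonpos hr (by linarith)
      have : N * (μ m / μ k) ^ (-ν) ≤ N := by nlinarith
      exact mul_le_mul_of_nonneg_right this (nrm_nonneg hNrm _ _)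
    · intro m k hm hmk x z hz heq
      have base := h2 m k hm hmk x z hz heq
      refine base.trans ?_
      have hr : 1 ≤ μ k / μ m := (one_le_div (hμ.pos m)).mpr (hμ.1.monotone hmk)
      have hrp : (μ k / μ m) ^ (-ν) ≤ 1 :=
        Real.rpow_le_one_of_one_le_of_nonpos hr (by linarith)
      have : N * (μ k / μ m) ^ (-ν) ≤ N := by nlinarith
      exact mul_le_mul_of_nonneg_right this (nrm_nonneg hNrm _ _)
  · -- rescaled dichotomies
    intro η hη ⟨θη, hθη1, hθη⟩
    refine ⟨⟨?_, ?_, ?_⟩, N * (θμ * θη) ^ ν, ν, ?_, hν, ?_, ?_⟩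
    · exact fun k _ => hP.1 _ one_le_idxQ
    · exact fun k _ => evol_proj_comm hP one_le_idxQ (idxQ_mono hμ hη (Nat.le_succ k))
    · exact fun k _ => evol_bijOn hP one_le_idxQ (idxQ_mono hμ hη (Nat.le_succ k))
    · calc (1:ℝ) ≤ N := hN
        _ = N * 1 := (mul_one N).symm
        _ ≤ N * (θμ * θη) ^ ν :=
            mul_le_mul_of_nonneg_left (one_le_rpow' (by nlinarith) hν.le) (by linarith)
    · intro k m hk hkm x
      dsimp only
      rw [evol_Qseq hμ hη hkm]
      have base := h1 (idxQ μ η k) (idxQ μ η m) one_le_idxQ (idxQ_mono hμ hη hkm) x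
      refine const_transfer (by linarith)
        (div_pos (hμ.pos _) (hμ.pos _)) (div_pos (hη.pos _) (hη.pos _))
        (by nlinarith) hν.le ?_ (nrm_nonneg hNrm _ _) base
      rw [mul_div_assoc', div_le_div_iff₀ (hη.pos k) (hμ.pos _)]
      have f1 : η m ≤ θη * η (m - 1) := by
        have := ratio_step hη hθη (m - 1)
        rwa [show m - 1 + 1 = m by omega] at this
      have f2 : η (m - 1) ≤ μ (idxQ μ η m) := (eta_lt_mu_idxQ hμ hη m).le
      have f3 : μ (idxQ μ η k) ≤ θμ * η (k - 1) := mu_idxQ_le hμ hη hθμ1 hθμ k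
      have f4 : η (k - 1) ≤ η k := hη.1.monotone (by omega)
      calc η m * μ (idxQ μ η k) ≤ (θη * η (m - 1)) * (θμ * η (k - 1)) :=
            mul_le_mul f1 f3 (hμ.pos _).le
              (mul_nonneg (by linarith) (hη.pos _).le)
        _ ≤ (θη * μ (idxQ μ η m)) * (θμ * η k) :=
            mul_le_mul (mul_le_mul_of_nonneg_left f2 (by linarith))
              (mul_le_mul_of_nonneg_left f4 (by linarith))
              (mul_nonneg (by linarith) (hη.pos _).le)
              (mul_nonneg (by linarith) (hμ.pos _).le)
        _ = θμ * θη * μ (idxQ μ η m) * η k := by ring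
    · intro m k hm hmk x z hz heq
      dsimp only at hz heq ⊢
      rw [evol_Qseq hμ hη hmk] at heq
      have base := h2 (idxQ μ η m) (idxQ μ η k) one_le_idxQ (idxQ_mono hμ hη hmk) x z hz heq
      refine const_transfer (by linarith)
        (div_pos (hμ.pos _) (hμ.pos _)) (div_pos (hη.pos _) (hη.pos _))
        (by nlinarith) hν.le ?_ (nrm_nonneg hNrm _ _) base
      rw [mul_div_assoc', div_le_div_iff₀ (hη.pos m) (hμ.pos _)]
      have f1 : η k ≤ θη * η (k - 1) := by
        have := ratio_step hη hθη (k - 1)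
        rwa [show k - 1 + 1 = k by omega] at this
      have f2 : η (k - 1) ≤ μ (idxQ μ η k) := (eta_lt_mu_idxQ hμ hη k).le
      have f3 : μ (idxQ μ η m) ≤ θμ * η (m - 1) := mu_idxQ_le hμ hη hθμ1 hθμ m
      have f4 : η (m - 1) ≤ η m := hη.1.monotone (by omega)
      calc η k * μ (idxQ μ η m) ≤ (θη * η (k - 1)) * (θμ * η (m - 1)) :=
            mul_le_mul f1 f3 (hμ.pos _).le
              (mul_nonneg (by linarith) (hη.pos _).le)
        _ ≤ (θη * μ (idxQ μ η k)) * (θμ * η m) :=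
            mul_le_mul (mul_le_mul_of_nonneg_left f2 (by linarith))
              (mul_le_mul_of_nonneg_left f4 (by linarith))
              (mul_nonneg (by linarith) (hη.pos _).le)
              (mul_nonneg (by linarith) (hμ.pos _).le)
        _ = θμ * θη * μ (idxQ μ η k) * η m := by ring

end Directions

section Dir31

variable {μ η : ℕ → ℝ} {A P : ℕ → X →L[ℝ] X} {Nrm : ℕ → X → ℝ}

/-- `k ≤ idxQ μ η (q0 + 2)` where `q0 = floorInvTilde η (μ (k-1))`. -/
lemma le_idx_pp (hμ : IsGrowthRate μ) (hη : IsGrowthRate η) {k : ℕ} (hk : 1 ≤ k) :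
    k ≤ idxQ μ η (floorInvTilde η (μ (k - 1)) + 2) := by
  unfold idxQ
  have h1 : floorInvTilde η (μ (k - 1)) + 2 - 1 = floorInvTilde η (μ (k - 1)) + 1 := by omega
  rw [h1]
  have h2 : μ (k - 1) < η (floorInvTilde η (μ (k - 1)) + 1) :=
    floorInv_lt_succ hη (hμ.one_le _)
  have h3 : k - 1 ≤ floorInvTilde μ (η (floorInvTilde η (μ (k - 1)) + 1)) :=
    le_floorInv hμ h2.le
  omega

/-- `idxQ μ η (q0 + 1) ≤ k` where `q0 = floorInvTilde η (μ (k-1))`. -/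
lemma idx_qq_le (hμ : IsGrowthRate μ) (hη : IsGrowthRate η) {k : ℕ} (hk : 1 ≤ k) :
    idxQ μ η (floorInvTilde η (μ (k - 1)) + 1) ≤ k := by
  unfold idxQ
  have h1 : floorInvTilde η (μ (k - 1)) + 1 - 1 = floorInvTilde η (μ (k - 1)) := by omega
  rw [h1]
  have h2 : η (floorInvTilde η (μ (k - 1))) ≤ μ (k - 1) := floorInv_mem hη (hμ.one_le _)
  have h3 : μ (k - 1) < μ k := hμ.1 (by omega)
  by_contra h
  push_neg at h
  have h4 : k ≤ floorInvTilde μ (η (floorInvTilde η (μ (k - 1)))) := by omega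
  have h5 := (floorInv_le_iff hμ (hη.one_le _)).mp h4
  linarith

/-- `μ k ≤ θμ * η (q0 + 1)` where `q0 = floorInvTilde η (μ (k-1))`. -/
lemma mu_le_theta_eta (hμ : IsGrowthRate μ) (hη : IsGrowthRate η)
    {θμ : ℝ} (hθμ1 : 1 ≤ θμ) (hθμ : ∀ n, μ (n + 1) / μ n ≤ θμ) {k : ℕ} (hk : 1 ≤ k) :
    μ k ≤ θμ * η (floorInvTilde η (μ (k - 1)) + 1) := by
  have h1 : μ k ≤ θμ * μ (k - 1) := by
    have := ratio_step hμ hθμ (k - 1)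
    rwa [show k - 1 + 1 = k by omega] at this
  have h2 : μ (k - 1) < η (floorInvTilde η (μ (k - 1)) + 1) :=
    floorInv_lt_succ hη (hμ.one_le _)
  nlinarith [hμ.pos (k-1)]

/-- `η (q0 + 2) ≤ θη * θη * μ k` where `q0 = floorInvTilde η (μ (k-1))`. -/
lemma eta_pp_le (hμ : IsGrowthRate μ) (hη : IsGrowthRate η)
    {θη : ℝ} (hθη1 : 1 ≤ θη) (hθη : ∀ n, η (n + 1) / η n ≤ θη) {k : ℕ} (hk : 1 ≤ k) :
    η (floorInvTilde η (μ (k - 1)) + 2) ≤ θη * θη * μ k := by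
  have h1 : η (floorInvTilde η (μ (k - 1)) + 2) ≤ θη * η (floorInvTilde η (μ (k - 1)) + 1) :=
    ratio_step hη hθη _
  have h2 : η (floorInvTilde η (μ (k - 1)) + 1) ≤ θη * η (floorInvTilde η (μ (k - 1))) :=
    ratio_step hη hθη _
  have h3 : η (floorInvTilde η (μ (k - 1))) ≤ μ (k - 1) := floorInv_mem hη (hμ.one_le _)
  have h4 : μ (k - 1) ≤ μ k := hμ.1.monotone (by omega)
  nlinarith [hη.pos (floorInvTilde η (μ (k - 1)) + 1), hη.pos (floorInvTilde η (μ (k - 1))),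
    hμ.pos (k - 1)]

lemma proj_idem_apply (hP : ProjectionsCompat A P) {k : ℕ} (hk : 1 ≤ k) (v : X) :
    P k (P k v) = P k v := by
  have := congrArg (fun T : X →L[ℝ] X => T v) (hP.1 k hk)
  simpa using this

lemma caseB_bound {K2 D2 ν r R L : ℝ} (hK2 : 0 ≤ K2) (hν : 0 ≤ ν)
    (hr1 : 0 < r) (hr2 : r ≤ D2) (hR : 0 ≤ R) (hL : L ≤ K2 * R) :
    L ≤ (K2 * D2 ^ ν) * r ^ (-ν) * R := by
  have hD2 : 0 < D2 := lt_of_lt_of_le hr1 hr2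
  have h1 : D2 ^ (-ν) ≤ r ^ (-ν) :=
    Real.rpow_le_rpow_of_nonpos hr1 hr2 (neg_nonpos.mpr hν)
  have h2 : (1:ℝ) ≤ D2 ^ ν * r ^ (-ν) := by
    calc (1:ℝ) = D2 ^ ν * D2 ^ (-ν) := by
          rw [← Real.rpow_add hD2]; simp
      _ ≤ D2 ^ ν * r ^ (-ν) :=
          mul_le_mul_of_nonneg_left h1 (Real.rpow_nonneg hD2.le ν)
  calc L ≤ K2 * R := hL
    _ = K2 * 1 * R := by ring
    _ ≤ K2 * (D2 ^ ν * r ^ (-ν)) * R :=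
        mul_le_mul_of_nonneg_right (mul_le_mul_of_nonneg_left h2 hK2) hR
    _ = (K2 * D2 ^ ν) * r ^ (-ν) * R := by ring

end Dir31


section Dir31Main

variable {μ η : ℕ → ℝ} {A P : ℕ → X →L[ℝ] X} {Nrm : ℕ → X → ℝ}

lemma D2_fact {θμ θη c : ℝ} (hθμ1 : 1 ≤ θμ) (hθη1 : 1 ≤ θη) (hc : 0 ≤ c) :
    (θμ * (θη * θη)) * c ≤ ((θμ * θη) * (θμ * θη)) * c := by
  refine mul_le_mul_of_nonneg_right ?_ hc
  calc θμ * (θη * θη) = (θμ * θη) * θη := by ring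
    _ ≤ (θμ * θη) * (θμ * θη) :=
        mul_le_mul_of_nonneg_left (le_mul_of_one_le_left (by linarith) hθμ1)
          (mul_nonneg (by linarith) (by linarith))

lemma ratio_D2 {θμ θη e1 e2 c1 c2 : ℝ} (hθμ1 : 1 ≤ θμ) (hθη1 : 1 ≤ θη)
    (h1 : c1 ≤ θμ * e1) (h2 : e2 ≤ θη * θη * c2) (he1 : 0 < e1) (he2 : 0 < e2)
    (hc1 : 0 ≤ c1) (hc2 : 0 < c2) :
    c1 * e2 ≤ ((θμ * θη) * (θμ * θη)) * e1 * c2 := by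
  calc c1 * e2 ≤ (θμ * e1) * (θη * θη * c2) :=
        mul_le_mul h1 h2 he2.le (mul_nonneg (by linarith) he1.le)
    _ = (θμ * (θη * θη)) * (e1 * c2) := by ring
    _ ≤ ((θμ * θη) * (θμ * θη)) * (e1 * c2) :=
        D2_fact hθμ1 hθη1 (mul_nonneg he1.le hc2.le)
    _ = ((θμ * θη) * (θμ * θη)) * e1 * c2 := by ring

/-- Forward chain through the rescaled dichotomy. -/
lemma caseA_est1 (hP : ProjectionsCompat A P) (hNrm : IsNormFamily Nrm)
    {K N s : ℝ} (hK0 : 0 ≤ K) (hN0 : 0 ≤ N) (hs0 : 0 ≤ s)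
    (ho1 : ∀ k m : ℕ, 1 ≤ k → k ≤ m → ∀ x : X, Nrm m (evol A m k (P k x)) ≤ K * Nrm k x)
    {k a b m : ℕ} (hk : 1 ≤ k) (hkp : k ≤ a) (hab : a ≤ b) (hqm : b ≤ m)
    (hmid : ∀ v : X, Nrm b (evol A b a (P a v)) ≤ N * s * Nrm a v) (x : X) :
    Nrm m (evol A m k (P k x)) ≤ (K * K * N) * s * Nrm k x := by
  have h1a : 1 ≤ a := hk.trans hkp
  have h1b : 1 ≤ b := h1a.trans hab
  have hPw : P a (evol A a k (P k x)) = evol A a k (P k x) := by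
    rw [evol_proj_apply hP hk hkp x, proj_idem_apply hP h1a]
  have step1 : Nrm a (evol A a k (P k x)) ≤ K * Nrm k x := ho1 k a hk hkp x
  have step2 := hmid (evol A a k (P k x))
  rw [hPw, evol_evol A hkp hab] at step2
  have hPu : P b (evol A b k (P k x)) = evol A b k (P k x) := by
    rw [evol_proj_apply hP hk (hkp.trans hab) x, proj_idem_apply hP h1b]
  have step3 := ho1 b m h1b hqm (evol A b k (P k x))
  rw [hPu, evol_evol A (hkp.trans hab) hqm] at step3
  have hsnn : (0:ℝ) ≤ N * s := mul_nonneg hN0 hs0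
  calc Nrm m (evol A m k (P k x)) ≤ K * Nrm b (evol A b k (P k x)) := step3
    _ ≤ K * (N * s * Nrm a (evol A a k (P k x))) := mul_le_mul_of_nonneg_left step2 hK0
    _ ≤ K * (N * s * (K * Nrm k x)) :=
        mul_le_mul_of_nonneg_left (mul_le_mul_of_nonneg_left step1 hsnn) hK0
    _ = (K * K * N) * s * Nrm k x := by ring

/-- Backward chain through the rescaled dichotomy. -/
lemma caseA_est2 (hP : ProjectionsCompat A P) (hNrm : IsNormFamily Nrm)
    {K N s : ℝ} (hK0 : 0 ≤ K) (hN0 : 0 ≤ N) (hs0 : 0 ≤ s)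
    (ho2 : ∀ m k : ℕ, 1 ≤ m → m ≤ k → ∀ x z : X, P m z = 0 → evol A k m z = x - P k x →
      Nrm m z ≤ K * Nrm k x)
    {m a b k : ℕ} (hm : 1 ≤ m) (hma : m ≤ a) (hab : a ≤ b) (hbk : b ≤ k)
    (hmid : ∀ u w : X, P a w = 0 → evol A b a w = u - P b u → Nrm a w ≤ N * s * Nrm b u)
    (x z : X) (hz : P m z = 0) (heq : evol A k m z = x - P k x) :
    Nrm m z ≤ (K * K * N) * s * Nrm k x := by
  have h1a : 1 ≤ a := hm.trans hma
  have h1b : 1 ≤ b := h1a.trans hab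
  have hPu : P b (evol A b m z) = 0 := by
    calc P b (evol A b m z) = evol A b m (P m z) :=
          (evol_proj_apply hP hm (hma.trans hab) z).symm
      _ = 0 := by rw [hz]; exact map_zero _
  have hPw : P a (evol A a m z) = 0 := by
    calc P a (evol A a m z) = evol A a m (P m z) := (evol_proj_apply hP hm hma z).symm
      _ = 0 := by rw [hz]; exact map_zero _
  have s_out : Nrm b (evol A b m z) ≤ K * Nrm k x := by
    refine ho2 b k h1b hbk x (evol A b m z) hPu ?_
    rw [evol_evol A (hma.trans hab) hbk z]; exact heq
  have s_mid : Nrm a (evol A a m z) ≤ N * s * Nrm b (evol A b m z) := by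
    refine hmid (evol A b m z) (evol A a m z) hPw ?_
    rw [hPu, sub_zero]; exact evol_evol A hma hab z
  have s_in : Nrm m z ≤ K * Nrm a (evol A a m z) := by
    refine ho2 m a hm hma (evol A a m z) z hz ?_
    rw [hPw, sub_zero]
  have hsnn : (0:ℝ) ≤ N * s := mul_nonneg hN0 hs0
  calc Nrm m z ≤ K * Nrm a (evol A a m z) := s_in
    _ ≤ K * (N * s * Nrm b (evol A b m z)) := mul_le_mul_of_nonneg_left s_mid hK0
    _ ≤ K * (N * s * (K * Nrm k x)) :=
        mul_le_mul_of_nonneg_left (mul_le_mul_of_nonneg_left s_out hsnn) hK0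
    _ = (K * K * N) * s * Nrm k x := by ring

lemma dir31 (hμ : IsGrowthRate μ) {θμ : ℝ} (hθμ1 : 1 ≤ θμ) (hθμ : ∀ n, μ (n + 1) / μ n ≤ θμ)
    (hη : IsGrowthRate η) {θη : ℝ} (hθη1 : 1 ≤ θη) (hθη : ∀ n, η (n + 1) / η n ≤ θη)
    (hNrm : IsNormFamily Nrm)
    (hod : OrdinaryDichotomyNormsWith A P Nrm)
    (hQ : MuDichotomyNormsWith η (Qseq A μ η) (fun k => P (idxQ μ η k))
      fun k => Nrm (idxQ μ η k)) :
    MuDichotomyNormsWith μ A P Nrm := by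
  obtain ⟨hP, K, hK, ho1, ho2⟩ := hod
  obtain ⟨-, N, ν, hN, hν, hq1, hq2⟩ := hQ
  have hK0 : (0:ℝ) ≤ K := by linarith
  have hN0 : (0:ℝ) ≤ N := by linarith
  have hKKN0 : (0:ℝ) ≤ K * K * N := mul_nonneg (mul_nonneg hK0 hK0) hN0
  have hD1 : (1:ℝ) ≤ θμ * θη := by
    have := mul_le_mul hθμ1 hθη1 zero_le_one (by linarith : (0:ℝ) ≤ θμ)
    linarith
  have hD2 : 1 ≤ (θμ * θη) * (θμ * θη) := by
    have := mul_le_mul hD1 hD1 zero_le_one (by linarith : (0:ℝ) ≤ θμ * θη)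
    linarith
  have hKK : (1:ℝ) ≤ K * K := by nlinarith
  have hKKN : (1:ℝ) ≤ K * K * N := by nlinarith
  refine ⟨hP, K * K * N * ((θμ * θη) * (θμ * θη)) ^ ν, ν, ?_, hν, ?_, ?_⟩
  · have hD2ν := one_le_rpow' hD2 hν.le
    have := mul_le_mul hKKN hD2ν zero_le_one hKKN0
    linarith
  · -- forward estimate
    intro k m hk hkm x
    have hm1 : 1 ≤ m := hk.trans hkm
    have hs0 : (0:ℝ) ≤ (η (floorInvTilde η (μ (m - 1)) + 1) /
        η (floorInvTilde η (μ (k - 1)) + 2)) ^ (-ν) :=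
      Real.rpow_nonneg (div_nonneg (hη.pos _).le (hη.pos _).le) _
    by_cases hpq : floorInvTilde η (μ (k - 1)) + 2 ≤ floorInvTilde η (μ (m - 1)) + 1
    · have hmid : ∀ v : X,
          Nrm (idxQ μ η (floorInvTilde η (μ (m - 1)) + 1))
            (evol A (idxQ μ η (floorInvTilde η (μ (m - 1)) + 1))
              (idxQ μ η (floorInvTilde η (μ (k - 1)) + 2))
              (P (idxQ μ η (floorInvTilde η (μ (k - 1)) + 2)) v)) ≤
            N * (η (floorInvTilde η (μ (m - 1)) + 1) /
              η (floorInvTilde η (μ (k - 1)) + 2)) ^ (-ν) *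
            Nrm (idxQ μ η (floorInvTilde η (μ (k - 1)) + 2)) v := by
        intro v
        have := hq1 _ _ (Nat.le_add_left 1 _) hpq v
        rwa [evol_Qseq hμ hη hpq] at this
      have ch := caseA_est1 hP hNrm hK0 hN0 hs0 ho1 hk (le_idx_pp hμ hη hk)
        (idxQ_mono hμ hη hpq) (idx_qq_le hμ hη hm1) hmid x
      refine const_transfer hKKN0 (div_pos (hη.pos _) (hη.pos _))
        (div_pos (hμ.pos m) (hμ.pos k)) hD2 hν.le ?_ (nrm_nonneg hNrm _ _) ch
      rw [mul_div_assoc', div_le_div_iff₀ (hμ.pos k) (hη.pos _)]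
      exact ratio_D2 hθμ1 hθη1 (mu_le_theta_eta hμ hη hθμ1 hθμ hm1)
        (eta_pp_le hμ hη hθη1 hθη hk) (hη.pos _) (hη.pos _) (hμ.pos m).le (hμ.pos k)
    · push_neg at hpq
      have f1 : μ m ≤ θμ * η (floorInvTilde η (μ (m - 1)) + 1) :=
        mu_le_theta_eta hμ hη hθμ1 hθμ hm1
      have f2 : θμ * η (floorInvTilde η (μ (m - 1)) + 1) ≤
          θμ * η (floorInvTilde η (μ (k - 1)) + 2) :=
        mul_le_mul_of_nonneg_left (hη.1.monotone (by omega)) (by linarith)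
      have f3 : θμ * η (floorInvTilde η (μ (k - 1)) + 2) ≤ θμ * (θη * θη * μ k) :=
        mul_le_mul_of_nonneg_left (eta_pp_le hμ hη hθη1 hθη hk) (by linarith)
      have f4 : (θμ * (θη * θη)) * μ k ≤ ((θμ * θη) * (θμ * θη)) * μ k :=
        D2_fact hθμ1 hθη1 (hμ.pos k).le
      have hr2 : μ m / μ k ≤ (θμ * θη) * (θμ * θη) := by
        rw [div_le_iff₀ (hμ.pos k)]
        nlinarith
      have hKN : (1:ℝ) ≤ K * N := by nlinarith
      have hKle : K ≤ K * K * N := by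
        calc K = K * 1 := (mul_one K).symm
          _ ≤ K * (K * N) := mul_le_mul_of_nonneg_left hKN hK0
          _ = K * K * N := by ring
      have direct : Nrm m (evol A m k (P k x)) ≤ (K * K * N) * Nrm k x :=
        (ho1 k m hk hkm x).trans (mul_le_mul_of_nonneg_right hKle (nrm_nonneg hNrm _ _))
      exact caseB_bound hKKN0 hν.le (div_pos (hμ.pos m) (hμ.pos k)) hr2
        (nrm_nonneg hNrm _ _) direct
  · -- backward estimate
    intro m k hm hmk x z hz heq
    have hk1 : 1 ≤ k := hm.trans hmk
    have hs0 : (0:ℝ) ≤ (η (floorInvTilde η (μ (k - 1)) + 1) /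
        η (floorInvTilde η (μ (m - 1)) + 2)) ^ (-ν) :=
      Real.rpow_nonneg (div_nonneg (hη.pos _).le (hη.pos _).le) _
    by_cases hpq : floorInvTilde η (μ (m - 1)) + 2 ≤ floorInvTilde η (μ (k - 1)) + 1
    · have hmid : ∀ u w : X,
          P (idxQ μ η (floorInvTilde η (μ (m - 1)) + 2)) w = 0 →
          evol A (idxQ μ η (floorInvTilde η (μ (k - 1)) + 1))
              (idxQ μ η (floorInvTilde η (μ (m - 1)) + 2)) w =
            u - P (idxQ μ η (floorInvTilde η (μ (k - 1)) + 1)) u →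
          Nrm (idxQ μ η (floorInvTilde η (μ (m - 1)) + 2)) w ≤
            N * (η (floorInvTilde η (μ (k - 1)) + 1) /
              η (floorInvTilde η (μ (m - 1)) + 2)) ^ (-ν) *
            Nrm (idxQ μ η (floorInvTilde η (μ (k - 1)) + 1)) u := by
        intro u w h1 h2
        refine hq2 _ _ (Nat.le_add_left 1 _) hpq u w h1 ?_
        rw [evol_Qseq hμ hη hpq]
        exact h2
      have ch := caseA_est2 hP hNrm hK0 hN0 hs0 ho2 hm (le_idx_pp hμ hη hm)
        (idxQ_mono hμ hη hpq) (idx_qq_le hμ hη hk1) hmid x z hz heq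
      refine const_transfer hKKN0 (div_pos (hη.pos _) (hη.pos _))
        (div_pos (hμ.pos k) (hμ.pos m)) hD2 hν.le ?_ (nrm_nonneg hNrm _ _) ch
      rw [mul_div_assoc', div_le_div_iff₀ (hμ.pos m) (hη.pos _)]
      exact ratio_D2 hθμ1 hθη1 (mu_le_theta_eta hμ hη hθμ1 hθμ hk1)
        (eta_pp_le hμ hη hθη1 hθη hm) (hη.pos _) (hη.pos _) (hμ.pos k).le (hμ.pos m)
    · push_neg at hpq
      have f1 : μ k ≤ θμ * η (floorInvTilde η (μ (k - 1)) + 1) :=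
        mu_le_theta_eta hμ hη hθμ1 hθμ hk1
      have f2 : θμ * η (floorInvTilde η (μ (k - 1)) + 1) ≤
          θμ * η (floorInvTilde η (μ (m - 1)) + 2) :=
        mul_le_mul_of_nonneg_left (hη.1.monotone (by omega)) (by linarith)
      have f3 : θμ * η (floorInvTilde η (μ (m - 1)) + 2) ≤ θμ * (θη * θη * μ m) :=
        mul_le_mul_of_nonneg_left (eta_pp_le hμ hη hθη1 hθη hm) (by linarith)
      have f4 : (θμ * (θη * θη)) * μ m ≤ ((θμ * θη) * (θμ * θη)) * μ m :=
        D2_fact hθμ1 hθη1 (hμ.pos m).le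
      have hr2 : μ k / μ m ≤ (θμ * θη) * (θμ * θη) := by
        rw [div_le_iff₀ (hμ.pos m)]
        nlinarith
      have hKN : (1:ℝ) ≤ K * N := by nlinarith
      have hKle : K ≤ K * K * N := by
        calc K = K * 1 := (mul_one K).symm
          _ ≤ K * (K * N) := mul_le_mul_of_nonneg_left hKN hK0
          _ = K * K * N := by ring
      have direct : Nrm m z ≤ (K * K * N) * Nrm k x :=
        (ho2 m k hm hmk x z hz heq).trans
          (mul_le_mul_of_nonneg_right hKle (nrm_nonneg hNrm _ _))
      exact caseB_bound hKKN0 hν.le (div_pos (hμ.pos k) (hμ.pos m)) hr2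
        (nrm_nonneg hNrm _ _) direct

end Dir31Main

/-- Theorem 2.1 (`teo:main`). -/
theorem mu_dichotomy_tfae_time_rescaling [CompleteSpace X]
    (μ : ℕ → ℝ) (hμ : IsGrowthRate μ)
    (hμθ : ∃ θ : ℝ, 1 ≤ θ ∧ ∀ n, μ (n + 1) / μ n ≤ θ)
    (A : ℕ → X →L[ℝ] X) (Nrm : ℕ → X → ℝ) (hNrm : IsNormFamily Nrm) :
    List.TFAE
      [∃ P : ℕ → X →L[ℝ] X, MuDichotomyNormsWith μ A P Nrm,
        ∃ P : ℕ → X →L[ℝ] X, OrdinaryDichotomyNormsWith A P Nrm ∧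
          ∀ η : ℕ → ℝ, IsGrowthRate η → (∃ θ : ℝ, 1 ≤ θ ∧ ∀ n, η (n + 1) / η n ≤ θ) →
            MuDichotomyNormsWith η (Qseq A μ η) (fun k => P (idxQ μ η k))
              fun k => Nrm (idxQ μ η k),
        ∃ P : ℕ → X →L[ℝ] X, OrdinaryDichotomyNormsWith A P Nrm ∧
          ∃ η : ℕ → ℝ, IsGrowthRate η ∧ (∃ θ : ℝ, 1 ≤ θ ∧ ∀ n, η (n + 1) / η n ≤ θ) ∧
            MuDichotomyNormsWith η (Qseq A μ η) (fun k => P (idxQ μ η k))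
              fun k => Nrm (idxQ μ η k)] := by
  obtain ⟨θμ, hθμ1, hθμ⟩ := hμθ
  tfae_have 1 → 2 := by
    rintro ⟨P, hd⟩
    exact ⟨P, dir12 hμ hθμ1 hθμ hNrm hd⟩
  tfae_have 2 → 3 := by
    rintro ⟨P, hod, hall⟩
    exact ⟨P, hod, μ, hμ, ⟨θμ, hθμ1, hθμ⟩, hall μ hμ ⟨θμ, hθμ1, hθμ⟩⟩
  tfae_have 3 → 1 := by
    rintro ⟨P, hod, η, hη, ⟨θη, hθη1, hθη⟩, hQ⟩
    exact ⟨P, dir31 hμ hθμ1 hθμ hη hθη1 hθη hNrm hod hQ⟩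
  tfae_finish

end
end

section
/- Let μ and η be discrete growth rates such that μ_{n+1}/μ_n ≤ θ and η_{n+1}/η_n ≤ θ for all n ≥ 0 and some θ ≥ 1. Let {A_n}_{n≥1} be a sequence of invertible bounded linear operators on a Banach space X and {‖·‖_k}_{k≥1} a sequence of norms such that for some K, a > 0: ‖Φ_A(m,k)x‖_m ≤ K(μ_m/μ_k)^a ‖x‖_k for all m ≥ k and x ∈ X, and ‖Φ_A(m,k)x‖_m ≤ K(μ_k/μ_m)^a ‖x‖_k for all m ≤ k and x ∈ X. Then there exists K' > 0 such that ‖Φ_{Q^{μ,η}}(m,k)x‖_m^η ≤ K'(η_m/η_k)^a ‖x‖_k^η for all m ≥ k and x ∈ X, and ‖Φ_{Q^{μ,η}}(m,k)x‖_m^η ≤ K'(η_k/η_m)^a ‖x‖_k^η for all m ≤ k and x ∈ X. -/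
noncomputable section

open Filter Metric Set Topology

variable {X : Type*} [NormedAddCommGroup X] [NormedSpace ℝ X]

section AuxLemmas

lemma normFamily_nonneg {Nrm : ℕ → X → ℝ} (h : IsNormFamily Nrm) (k : ℕ) (x : X) :
    0 ≤ Nrm k x := by
  obtain ⟨htri, hsmul, -⟩ := h k
  have h0 : Nrm k (0 : X) = 0 := by simpa using hsmul 0 0
  have hneg : Nrm k (-x) = Nrm k x := by simpa using hsmul (-1) x
  have h2 := htri x (-x)
  rw [add_neg_cancel, h0, hneg] at h2
  linarith

lemma evolFwdE_add' (A : ℕ → X ≃L[ℝ] X) (a n m : ℕ) :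
    evolFwdE A a (n + m) = (evolFwdE A a n).trans (evolFwdE A (a + n) m) := by
  induction m with
  | zero => ext x; simp [evolFwdE]
  | succ m ih =>
    ext x
    have hadd : a + n + m = a + (n + m) := by ring
    simp [show n + (m + 1) = (n + m) + 1 from rfl, evolFwdE, ih, hadd]

lemma evolFwdE_Q (A : ℕ → X ≃L[ℝ] X) (μ η : ℕ → ℝ)
    (hι : Monotone (idxQ μ η)) (k n : ℕ) :
    evolFwdE (QseqE A μ η) k n =
      evolFwdE A (idxQ μ η k) (idxQ μ η (k + n) - idxQ μ η k) := by
  induction n with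
  | zero => simp [evolFwdE]
  | succ n ih =>
    have h1 : idxQ μ η k ≤ idxQ μ η (k + n) := hι (Nat.le_add_right _ _)
    have h2 : idxQ μ η (k + n) ≤ idxQ μ η (k + n + 1) := hι (Nat.le_succ _)
    have hQ : QseqE A μ η (k + n) =
        evolFwdE A (idxQ μ η (k + n)) (idxQ μ η (k + n + 1) - idxQ μ η (k + n)) := by
      rw [QseqE, evolEquiv, if_pos h2]
    have e1 : idxQ μ η k + (idxQ μ η (k + n) - idxQ μ η k) = idxQ μ η (k + n) :=
      Nat.add_sub_cancel' h1
    have hc := evolFwdE_add' A (idxQ μ η k) (idxQ μ η (k + n) - idxQ μ η k)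
      (idxQ μ η (k + n + 1) - idxQ μ η (k + n))
    rw [e1] at hc
    have e2 : (idxQ μ η (k + n) - idxQ μ η k) + (idxQ μ η (k + n + 1) - idxQ μ η (k + n))
        = idxQ μ η (k + n + 1) - idxQ μ η k := by omega
    rw [e2] at hc
    show (evolFwdE (QseqE A μ η) k n).trans (QseqE A μ η (k + n)) = _
    rw [ih, hQ, ← hc]
    rfl

lemma evolEquiv_Q (A : ℕ → X ≃L[ℝ] X) (μ η : ℕ → ℝ)
    (hι : Monotone (idxQ μ η)) (m k : ℕ) :
    evolEquiv (QseqE A μ η) m k = evolEquiv A (idxQ μ η m) (idxQ μ η k) := by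
  by_cases h : k ≤ m
  · have h' : idxQ μ η k ≤ idxQ μ η m := hι h
    rw [evolEquiv, if_pos h, evolFwdE_Q A μ η hι, Nat.add_sub_cancel' h,
      evolEquiv, if_pos h']
  · push_neg at h
    have h' : idxQ μ η m ≤ idxQ μ η k := hι h.le
    rw [evolEquiv, if_neg (by omega), evolFwdE_Q A μ η hι, Nat.add_sub_cancel' h.le]
    by_cases he : idxQ μ η k ≤ idxQ μ η m
    · have heq : idxQ μ η m = idxQ μ η k := le_antisymm h' he
      rw [evolEquiv, if_pos he, heq]
      simp [evolFwdE, Nat.sub_self]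
    · rw [evolEquiv, if_neg he]

lemma floorInvTilde_le_lt {μ : ℕ → ℝ} (hμ : IsGrowthRate μ) {t : ℝ} (ht : 1 ≤ t) :
    μ (floorInvTilde μ t) ≤ t ∧ t < μ (floorInvTilde μ t + 1) := by
  obtain ⟨hsm, h0, htop⟩ := hμ
  have hne : {n : ℕ | μ n ≤ t}.Nonempty := ⟨0, by simpa [h0] using ht⟩
  obtain ⟨N, hN⟩ := Filter.eventually_atTop.mp (htop.eventually_ge_atTop (t + 1))
  have hbdd : BddAbove {n : ℕ | μ n ≤ t} := by
    refine ⟨N, fun n hn => ?_⟩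
    by_contra hc
    push_neg at hc
    have := hN n (le_of_lt hc)
    simp only [Set.mem_setOf_eq] at hn
    linarith
  constructor
  · exact Nat.sSup_mem hne hbdd
  · by_contra hc
    push_neg at hc
    have hmem : floorInvTilde μ t + 1 ∈ {n : ℕ | μ n ≤ t} := hc
    have h2 : floorInvTilde μ t + 1 ≤ floorInvTilde μ t := le_csSup hbdd hmem
    omega

lemma floorInvTilde_mono' {μ : ℕ → ℝ} (hμ : IsGrowthRate μ) {s t : ℝ}
    (hs : 1 ≤ s) (hst : s ≤ t) : floorInvTilde μ s ≤ floorInvTilde μ t := by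
  obtain ⟨hsm, h0, htop⟩ := hμ
  have hne : {n : ℕ | μ n ≤ s}.Nonempty := ⟨0, by simpa [h0] using hs⟩
  obtain ⟨N, hN⟩ := Filter.eventually_atTop.mp (htop.eventually_ge_atTop (t + 1))
  have hbdd : BddAbove {n : ℕ | μ n ≤ t} := by
    refine ⟨N, fun n hn => ?_⟩
    by_contra hc
    push_neg at hc
    have := hN n (le_of_lt hc)
    simp only [Set.mem_setOf_eq] at hn
    linarith
  exact csSup_le_csSup hbdd hne (fun n hn => le_trans hn hst)

end AuxLemmas

/-- bounded growth is preserved by time rescaling (first part of Theorem 2.5). -/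
theorem rescaled_bounded_growth [CompleteSpace X]
    (μ η : ℕ → ℝ) (hμ : IsGrowthRate μ) (hη : IsGrowthRate η)
    (θ : ℝ) (hθ : 1 ≤ θ) (hμr : ∀ n, μ (n + 1) / μ n ≤ θ) (hηr : ∀ n, η (n + 1) / η n ≤ θ)
    (A : ℕ → X ≃L[ℝ] X) (Nrm : ℕ → X → ℝ) (hNrm : IsNormFamily Nrm)
    (K a : ℝ) (hK : 0 < K) (ha : 0 < a)
    (hfwd : ∀ k m : ℕ, 1 ≤ k → k ≤ m → ∀ x : X,
      Nrm m (evolE A m k x) ≤ K * (μ m / μ k) ^ a * Nrm k x)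
    (hbwd : ∀ m k : ℕ, 1 ≤ m → m ≤ k → ∀ x : X,
      Nrm m (evolE A m k x) ≤ K * (μ k / μ m) ^ a * Nrm k x) :
    ∃ K' : ℝ, 0 < K' ∧
      (∀ k m : ℕ, 1 ≤ k → k ≤ m → ∀ x : X,
        Nrm (idxQ μ η m) (evolE (QseqE A μ η) m k x) ≤
          K' * (η m / η k) ^ a * Nrm (idxQ μ η k) x) ∧
      (∀ m k : ℕ, 1 ≤ m → m ≤ k → ∀ x : X,
        Nrm (idxQ μ η m) (evolE (QseqE A μ η) m k x) ≤
          K' * (η k / η m) ^ a * Nrm (idxQ μ η k) x) := by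
  have hμ1 : ∀ n, 1 ≤ μ n := fun n => hμ.2.1 ▸ hμ.1.monotone (Nat.zero_le n)
  have hη1 : ∀ n, 1 ≤ η n := fun n => hη.2.1 ▸ hη.1.monotone (Nat.zero_le n)
  have hθ0 : (0 : ℝ) < θ := lt_of_lt_of_le one_pos hθ
  have hμpos : ∀ n, (0 : ℝ) < μ n := fun n => lt_of_lt_of_le one_pos (hμ1 n)
  have hηpos : ∀ n, (0 : ℝ) < η n := fun n => lt_of_lt_of_le one_pos (hη1 n)
  have hμθ : ∀ n, μ (n + 1) ≤ θ * μ n := by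
    intro n
    have := hμr n
    rw [div_le_iff₀ (hμpos n)] at this
    linarith [this]
  have hηθ : ∀ n, η (n + 1) ≤ θ * η n := by
    intro n
    have := hηr n
    rw [div_le_iff₀ (hηpos n)] at this
    linarith [this]
  have hι : Monotone (idxQ μ η) := by
    intro k m hkm
    exact Nat.add_le_add_right
      (floorInvTilde_mono' hμ (hη1 (k - 1)) (hη.1.monotone (Nat.sub_le_sub_right hkm 1))) 1
  have hle : ∀ m, μ (idxQ μ η m) ≤ θ * η (m - 1) := by
    intro m
    have h1 := (floorInvTilde_le_lt hμ (hη1 (m - 1))).1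
    calc μ (idxQ μ η m) ≤ θ * μ (floorInvTilde μ (η (m - 1))) := hμθ _
      _ ≤ θ * η (m - 1) := by nlinarith
  have hgt : ∀ m, η (m - 1) < μ (idxQ μ η m) := fun m =>
    (floorInvTilde_le_lt hμ (hη1 (m - 1))).2
  have hratio : ∀ k m : ℕ, 1 ≤ k →
      μ (idxQ μ η m) / μ (idxQ μ η k) ≤ θ * θ * (η m / η k) := by
    intro k m hk
    have hnum : μ (idxQ μ η m) ≤ θ * η m := by
      have := hle m
      have h2 : η (m - 1) ≤ η m := hη.1.monotone (Nat.sub_le m 1)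
      nlinarith
    have hden : η k ≤ θ * μ (idxQ μ η k) := by
      have hk1 : k - 1 + 1 = k := Nat.succ_pred_eq_of_pos hk
      have h1 : η k ≤ θ * η (k - 1) := by
        have := hηθ (k - 1)
        rwa [hk1] at this
      have h2 := hgt k
      nlinarith
    rw [mul_div_assoc' (θ * θ), div_le_div_iff₀ (hμpos _) (hηpos _)]
    nlinarith [mul_le_mul hnum hden (le_of_lt (hηpos k)) (mul_nonneg (le_of_lt hθ0) (le_of_lt (hηpos m)))]
  have hrpow : ∀ k m : ℕ, 1 ≤ k →
      (μ (idxQ μ η m) / μ (idxQ μ η k)) ^ a ≤ θ ^ a * θ ^ a * (η m / η k) ^ a := by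
    intro k m hk
    calc (μ (idxQ μ η m) / μ (idxQ μ η k)) ^ a
        ≤ (θ * θ * (η m / η k)) ^ a :=
          Real.rpow_le_rpow (div_nonneg (le_of_lt (hμpos _)) (le_of_lt (hμpos _)))
            (hratio k m hk) (le_of_lt ha)
      _ = θ ^ a * θ ^ a * (η m / η k) ^ a := by
          rw [Real.mul_rpow (mul_nonneg (le_of_lt hθ0) (le_of_lt hθ0)) (div_nonneg (le_of_lt (hηpos _)) (le_of_lt (hηpos _))),
            Real.mul_rpow (le_of_lt hθ0) (le_of_lt hθ0)]
  refine ⟨K * (θ ^ a * θ ^ a), by positivity, ?_, ?_⟩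
  · intro k m hk hkm x
    have hik : 1 ≤ idxQ μ η k := Nat.succ_le_succ (Nat.zero_le _)
    have key : evolE (QseqE A μ η) m k = evolE A (idxQ μ η m) (idxQ μ η k) := by
      simp only [evolE, evolEquiv_Q A μ η hι]
    rw [key]
    calc Nrm (idxQ μ η m) (evolE A (idxQ μ η m) (idxQ μ η k) x)
        ≤ K * (μ (idxQ μ η m) / μ (idxQ μ η k)) ^ a * Nrm (idxQ μ η k) x :=
          hfwd _ _ hik (hι hkm) x
      _ ≤ K * (θ ^ a * θ ^ a * (η m / η k) ^ a) * Nrm (idxQ μ η k) x := by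
          apply mul_le_mul_of_nonneg_right _ (normFamily_nonneg hNrm _ _)
          exact mul_le_mul_of_nonneg_left (hrpow k m hk) (le_of_lt hK)
      _ = K * (θ ^ a * θ ^ a) * (η m / η k) ^ a * Nrm (idxQ μ η k) x := by ring
  · intro m k hm hmk x
    have him : 1 ≤ idxQ μ η m := Nat.succ_le_succ (Nat.zero_le _)
    have key : evolE (QseqE A μ η) m k = evolE A (idxQ μ η m) (idxQ μ η k) := by
      simp only [evolE, evolEquiv_Q A μ η hι]
    rw [key]
    calc Nrm (idxQ μ η m) (evolE A (idxQ μ η m) (idxQ μ η k) x)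
        ≤ K * (μ (idxQ μ η k) / μ (idxQ μ η m)) ^ a * Nrm (idxQ μ η k) x :=
          hbwd _ _ him (hι hmk) x
      _ ≤ K * (θ ^ a * θ ^ a * (η k / η m) ^ a) * Nrm (idxQ μ η k) x := by
          apply mul_le_mul_of_nonneg_right _ (normFamily_nonneg hNrm _ _)
          exact mul_le_mul_of_nonneg_left (hrpow m k hm) (le_of_lt hK)
      _ = K * (θ ^ a * θ ^ a) * (η k / η m) ^ a * Nrm (idxQ μ η k) x := by ring


end
end
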